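/- For every integer d ≥ 1 and every natural number m, the number of lattice points in the m-th dilate of the d-dimensional cross-polytope equals ∑_{j=0}^{d} C(d,j)·C(d-j+m, d); that is, the cardinality of {x ∈ ℤ^d : |x_1| + ... + |x_d| ≤ m} equals ∑_{j=0}^{d} C(d,j)·C(d-j+m, d), where C(·,·) denotes the binomial coefficient. -/

import Mathlib

/-!
Sort the lattice points `x` by the set `s` of their negative coordinates. On the points with
negative set `s`, the map `x ↦ z` with `z i = x i` for `i ∉ s` and `z i = -x i - 1` for `i ∈ s`
is a bijection onto the points `z ∈ ℕ^d` with `∑ z ≤ m - #s`, and by stars and bars there are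
`C(d + m - #s, d)` of those. Grouping the `C(d, j)` sets `s` of size `j` gives the formula.
-/

open Finset

variable {ι : Type*} [DecidableEq ι]

def signedLift (s : Finset ι) (z : ι → ℕ) (i : ι) : ℤ :=
  if i ∈ s then -(z i : ℤ) - 1 else z i

theorem natAbs_signedLift (s : Finset ι) (z : ι → ℕ) (i : ι) :
    (signedLift s z i).natAbs = z i + if i ∈ s then 1 else 0 := by
  unfold signedLift
  split_ifs <;> omega

theorem signedLift_neg_iff (s : Finset ι) (z : ι → ℕ) (i : ι) : signedLift s z i < 0 ↔ i ∈ s := by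
  unfold signedLift
  split_ifs with hi <;> simp only [hi, iff_true, iff_false] <;> omega

variable [Fintype ι]

def negSet (x : ι → ℤ) : Finset ι := univ.filter fun i => x i < 0

theorem negSet_signedLift (s : Finset ι) (z : ι → ℕ) : negSet (signedLift s z) = s := by
  ext i
  simp [negSet, signedLift_neg_iff]

theorem signedLift_natAbs_sub {x : ι → ℤ} {s : Finset ι} (hx : negSet x = s) :
    signedLift s (fun i => (x i).natAbs - if i ∈ s then 1 else 0) = x := by
  funext i
  have hi : x i < 0 ↔ i ∈ s := by simp [← hx, negSet]
  unfold signedLift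
  split_ifs with h <;> simp only [h, iff_true, iff_false, if_true, if_false] at hi ⊢ <;> omega

theorem sum_natAbs_signedLift (s : Finset ι) (z : ι → ℕ) :
    ∑ i, (signedLift s z i).natAbs = ∑ i, z i + #s := by
  simp [natAbs_signedLift, sum_add_distrib]

theorem card_piAntidiag_univ (n : ℕ) :
    #(piAntidiag (univ : Finset ι) n) = (Fintype.card ι + n - 1).choose n := by
  rw [← map_sym_eq_piAntidiag, card_map, sym_univ, card_univ, Sym.card_sym_eq_choose]

variable (ι) in
def simplexPoints (k : ℕ) : Finset (ι → ℕ) :=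
  (Fintype.piFinset fun _ => range (k + 1)).filter fun z => ∑ i, z i ≤ k

theorem mem_simplexPoints {k : ℕ} {z : ι → ℕ} : z ∈ simplexPoints ι k ↔ ∑ i, z i ≤ k := by
  simp only [simplexPoints, mem_filter, Fintype.mem_piFinset, mem_range, and_iff_right_iff_imp]
  exact fun h i =>
    Nat.lt_succ_of_le ((single_le_sum (fun j _ => Nat.zero_le (z j)) (mem_univ i)).trans h)

-- Stars and bars, after adding a slack coordinate `k - ∑ z` in the extra slot `none`.
theorem card_simplexPoints (k : ℕ) :
    #(simplexPoints ι k) = (Fintype.card ι + k).choose k := by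
  have h := card_piAntidiag_univ (ι := Option ι) k
  rw [Fintype.card_option, Nat.add_right_comm, Nat.add_sub_cancel] at h
  rw [← h]
  refine card_nbij' (fun z o => o.elim (k - ∑ i, z i) z) (fun f i => f (some i))
    ?_ ?_ ?_ ?_
  · intro z hz
    simp only [mem_coe, mem_simplexPoints, mem_piAntidiag, Fintype.sum_option, Option.elim_none,
      Option.elim_some, ne_eq, mem_univ, implies_true, and_true] at hz ⊢
    omega
  · intro f hf
    simp only [mem_coe, mem_piAntidiag, mem_simplexPoints, Fintype.sum_option] at hf ⊢
    omega
  · intro z _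
    rfl
  · intro f hf
    simp only [mem_coe, mem_piAntidiag, Fintype.sum_option] at hf
    funext o
    cases o with
    | none => simp only [Option.elim_none]; omega
    | some i => rfl

variable (ι) in
noncomputable def crossPolytopePoints (m : ℕ) : Finset (ι → ℤ) :=
  (Fintype.piFinset fun _ => Icc (-(m : ℤ)) m).filter fun x => ∑ i, (x i).natAbs ≤ m

theorem mem_crossPolytopePoints {m : ℕ} {x : ι → ℤ} :
    x ∈ crossPolytopePoints ι m ↔ ∑ i, (x i).natAbs ≤ m := by
  simp only [crossPolytopePoints, mem_filter, Fintype.mem_piFinset, mem_Icc,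
    and_iff_right_iff_imp]
  intro h i
  have := (single_le_sum (fun j _ => Nat.zero_le (x j).natAbs) (mem_univ i)).trans h
  omega

theorem coe_crossPolytopePoints (m : ℕ) :
    (crossPolytopePoints ι m : Set (ι → ℤ)) = {x | ∑ i, |x i| ≤ (m : ℤ)} := by
  ext x
  simp only [mem_coe, mem_crossPolytopePoints, Set.mem_ofPred_eq, ← Int.natCast_natAbs,
    ← Nat.cast_sum, Nat.cast_le]

theorem card_filter_negSet_eq (m : ℕ) (s : Finset ι) (hs : #s ≤ m) :
    #((crossPolytopePoints ι m).filter fun x => negSet x = s) = #(simplexPoints ι (m - #s)) := by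
  refine card_nbij' (fun x i => (x i).natAbs - if i ∈ s then 1 else 0) (signedLift s)
    ?_ ?_ ?_ ?_
  · intro x hx
    simp only [coe_filter, Set.mem_ofPred_eq, mem_crossPolytopePoints, mem_coe,
      mem_simplexPoints] at hx ⊢
    have := sum_natAbs_signedLift s (fun i => (x i).natAbs - if i ∈ s then 1 else 0)
    rw [signedLift_natAbs_sub hx.2] at this
    omega
  · intro z hz
    simp only [coe_filter, Set.mem_ofPred_eq, mem_crossPolytopePoints, mem_coe,
      mem_simplexPoints, sum_natAbs_signedLift, negSet_signedLift, and_true] at hz ⊢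
    omega
  · intro x hx
    exact signedLift_natAbs_sub (mem_filter.1 hx).2
  · intro z _
    funext i
    simp [natAbs_signedLift]

theorem filter_negSet_eq_empty (m : ℕ) (s : Finset ι) (hs : m < #s) :
    (crossPolytopePoints ι m).filter (fun x => negSet x = s) = ∅ := by
  refine filter_false_of_mem fun x hx hxs => ?_
  rw [mem_crossPolytopePoints, ← signedLift_natAbs_sub hxs, sum_natAbs_signedLift] at hx
  omega

theorem card_filter_negSet (m : ℕ) (s : Finset ι) :
    #((crossPolytopePoints ι m).filter fun x => negSet x = s)
      = (Fintype.card ι - #s + m).choose (Fintype.card ι) := by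
  have hs : #s ≤ Fintype.card ι := card_le_univ s
  rcases le_or_gt #s m with hsm | hsm
  · rw [card_filter_negSet_eq m s hsm, card_simplexPoints, ← Nat.choose_symm_add]
    congr 1
    omega
  · rw [filter_negSet_eq_empty m s hsm, card_empty, Nat.choose_eq_zero_of_lt (by omega)]

theorem card_crossPolytopePoints (m : ℕ) :
    #(crossPolytopePoints ι m) = ∑ j ∈ range (Fintype.card ι + 1),
      (Fintype.card ι).choose j * (Fintype.card ι - j + m).choose (Fintype.card ι) := by
  rw [card_eq_sum_card_fiberwise (fun x _ => mem_univ (negSet x))]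
  simp only [card_filter_negSet, ← powerset_univ]
  rw [sum_powerset_apply_card (fun j => (Fintype.card ι - j + m).choose (Fintype.card ι))]
  simp only [card_univ, smul_eq_mul]

theorem crossPolytope_lattice_point_count (d : ℕ) (m : ℕ) :
    Set.ncard {x : Fin d → ℤ | (∑ i, |x i|) ≤ (m : ℤ)} =
      ∑ j ∈ Finset.range (d + 1), Nat.choose d j * Nat.choose (d - j + m) d := by
  rw [← coe_crossPolytopePoints, Set.ncard_coe_finset, card_crossPolytopePoints,
    Fintype.card_fin]
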